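/- (Deterministic clustering error bound from Lemma 3.) Let d ≥ 1, N ≥ 1, and let h : ℝ^d → ℝ satisfy |h(x) − h(x')| ≤ B'·‖x − x'‖₁ for all x, x' and some B' > 0. Let c and c* be finite nonempty index sets with |c| ≤ N and |c*| ≤ N, and for each index i let x_i ∈ ℝ^d have all entries nonnegative; write x̄_c and x̄_{c*} for the means of the vectors indexed by c and by c* respectively. Suppose there exist a vector y ∈ ℝ^d and constants 0 < V ≤ Z, δ > 0, Y > 0, P > 0, C'' > 0 such that: all entries of x̄_c and of y are positive with V ≤ (x̄_c)_j / y_j ≤ Z for every j; ⟨x̄_c, y⟩ ≤ δ; ‖y‖₂ ≥ Y; P ≤ ⟨x̄_c, x̄_{c*}⟩; and ‖x̄_{c*}‖₂² ≤ C''. Then for every i* ∈ c* and every i ∈ c, h(x_{i*}) − h(x_i) ≤ B'·( C''·Q·δ·√d·N/(P·Y) + N·Q·δ·√d/Y ), where Q = (V + Z)/(2√(V·Z)). -/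

import Mathlib

/-!
The Kantorovich inequality `‖x̄_c‖₂ ‖y‖₂ ≤ Q ⟨x̄_c, y⟩ ≤ Q δ` together with `‖y‖₂ ≥ Y` makes the
mean of `c` short. Since `x̄_{c*}` is nevertheless aligned with it, `P ≤ ‖x̄_c‖₂ ‖x̄_{c*}‖₂` forces
`‖x̄_{c*}‖₂ ≥ P Y / (Q δ)`, so `‖x̄_{c*}‖₂² ≤ C''` bounds `‖x̄_{c*}‖₂` by `C'' Q δ / (P Y)`.
A nonnegative context of a cluster has `ℓ1` norm at most `N` times that of the cluster mean, hence
at most `N √d` times its Euclidean norm, and the Lipschitz bound on `h` finishes the proof.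
-/

open Finset

noncomputable def clusterMean {ι κ : Type*} (c : Finset ι) (x : ι → κ → ℝ) (j : κ) : ℝ :=
  (c.card : ℝ)⁻¹ * ∑ i ∈ c, x i j

section ClusterMean

variable {ι κ : Type*} {c : Finset ι} {x : ι → κ → ℝ}

theorem clusterMean_nonneg (hx : ∀ i j, 0 ≤ x i j) (j : κ) : 0 ≤ clusterMean c x j :=
  mul_nonneg (by positivity) (sum_nonneg fun i _ => hx i j)

theorem le_card_mul_clusterMean (hx : ∀ i j, 0 ≤ x i j) {i : ι} (hi : i ∈ c) (j : κ) :
    x i j ≤ c.card * clusterMean c x j := by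
  have hcard : (c.card : ℝ) ≠ 0 := by exact_mod_cast (card_pos.2 ⟨i, hi⟩).ne'
  rw [clusterMean, mul_inv_cancel_left₀ hcard]
  exact single_le_sum (fun i _ => hx i j) hi

theorem sum_le_mul_sqrt_card_mul_sqrt_sum_clusterMean_sq [Fintype κ] (hx : ∀ i j, 0 ≤ x i j)
    {N : ℕ} (hcN : c.card ≤ N) {i : ι} (hi : i ∈ c) :
    ∑ j, x i j ≤ N * √(Fintype.card κ) * √(∑ j, clusterMean c x j ^ 2) := by
  have hl1_le_l2 : ∑ j, clusterMean c x j ≤ √(Fintype.card κ) * √(∑ j, clusterMean c x j ^ 2) := by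
    simpa using Real.sum_mul_le_sqrt_mul_sqrt univ (fun _ => (1 : ℝ)) (clusterMean c x)
  calc ∑ j, x i j ≤ ∑ j, (N : ℝ) * clusterMean c x j := by
        gcongr with j
        exact (le_card_mul_clusterMean hx hi j).trans
          (mul_le_mul_of_nonneg_right (by exact_mod_cast hcN) (clusterMean_nonneg hx j))
    _ = N * ∑ j, clusterMean c x j := (mul_sum ..).symm
    _ ≤ N * √(Fintype.card κ) * √(∑ j, clusterMean c x j ^ 2) := by
        rw [mul_assoc]; gcongr

end ClusterMean

theorem sqrt_sum_sq_mul_sqrt_sum_sq_le_kantorovich {κ : Type*} (s : Finset κ) (u y : κ → ℝ)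
    {V Z : ℝ} (hV : 0 < V) (hVZ : V ≤ Z) (hlow : ∀ j ∈ s, V * y j ≤ u j)
    (hupp : ∀ j ∈ s, u j ≤ Z * y j) :
    √(∑ j ∈ s, u j ^ 2) * √(∑ j ∈ s, y j ^ 2) ≤
      (V + Z) / (2 * √(V * Z)) * ∑ j ∈ s, u j * y j := by
  set A := ∑ j ∈ s, u j ^ 2
  set B := ∑ j ∈ s, y j ^ 2
  have hVZpos : 0 < V * Z := mul_pos hV (hV.trans_le hVZ)
  have hsum : A + V * Z * B ≤ (V + Z) * ∑ j ∈ s, u j * y j := by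
    rw [mul_sum, mul_sum, ← sum_add_distrib]
    gcongr with j hj
    nlinarith [mul_nonneg (sub_nonneg.2 (hlow j hj)) (sub_nonneg.2 (hupp j hj))]
  have hamgm : 2 * √(V * Z) * (√A * √B) ≤ A + V * Z * B := by
    have hsq : (√A - √(V * Z) * √B) ^ 2 = A + V * Z * B - 2 * √(V * Z) * (√A * √B) := by
      rw [sub_sq, mul_pow, Real.sq_sqrt (by positivity), Real.sq_sqrt hVZpos.le,
        Real.sq_sqrt (by positivity)]
      ring
    nlinarith [sq_nonneg (√A - √(V * Z) * √B)]
  rw [div_mul_eq_mul_div, le_div_iff₀ (by positivity)]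
  linarith

theorem le_div_of_alignment {a b Y P C q : ℝ} (hY : 0 < Y) (hP : 0 < P) (hq : 0 ≤ q)
    (hb : 0 ≤ b) (ha : a * Y ≤ q) (hab : P ≤ a * b) (hbC : b ^ 2 ≤ C) :
    b ≤ C * q / (P * Y) := by
  rw [le_div_iff₀ (by positivity)]
  have hPY : P * Y ≤ b * q := by nlinarith
  nlinarith

theorem sub_le_mul_sum_add_sum_of_lipschitz {κ : Type*} [Fintype κ] {h : (κ → ℝ) → ℝ} {B' : ℝ}
    (hB' : 0 ≤ B') (hlip : ∀ u u' : κ → ℝ, |h u - h u'| ≤ B' * ∑ j, |u j - u' j|)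
    {u v : κ → ℝ} (hu : ∀ j, 0 ≤ u j) (hv : ∀ j, 0 ≤ v j) :
    h u - h v ≤ B' * (∑ j, u j + ∑ j, v j) := by
  calc h u - h v ≤ B' * ∑ j, |u j - v j| := (le_abs_self _).trans (hlip u v)
    _ ≤ B' * (∑ j, u j + ∑ j, v j) := by
        rw [← sum_add_distrib]
        gcongr with j
        exact (abs_sub _ _).trans_eq (by rw [abs_of_nonneg (hu j), abs_of_nonneg (hv j)])

theorem clustering_error_bound_general {ι : Type*} (d N : ℕ)
    (h : (Fin d → ℝ) → ℝ) (B' : ℝ) (hB' : 0 < B')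
    (hlip : ∀ u u' : Fin d → ℝ, |h u - h u'| ≤ B' * ∑ j, |u j - u' j|)
    (c cstar : Finset ι)
    (hcN : c.card ≤ N) (hcstarN : cstar.card ≤ N)
    (x : ι → Fin d → ℝ) (hx : ∀ i, ∀ j, 0 ≤ x i j)
    (y : Fin d → ℝ) (V Z δ Y P C'' : ℝ)
    (hV : 0 < V) (hVZ : V ≤ Z) (hδ : 0 < δ) (hY : 0 < Y)
    (hP : 0 < P)
    (hypos : ∀ j, 0 < y j)
    (hratio : ∀ j, V ≤ ((c.card : ℝ)⁻¹ * ∑ i ∈ c, x i j) / y j ∧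
      ((c.card : ℝ)⁻¹ * ∑ i ∈ c, x i j) / y j ≤ Z)
    (hdot : ∑ j, ((c.card : ℝ)⁻¹ * ∑ i ∈ c, x i j) * y j ≤ δ)
    (hynorm : Y ≤ Real.sqrt (∑ j, (y j) ^ 2))
    (halign : P ≤ ∑ j, ((c.card : ℝ)⁻¹ * ∑ i ∈ c, x i j) *
      ((cstar.card : ℝ)⁻¹ * ∑ i ∈ cstar, x i j))
    (hstarnorm : ∑ j, ((cstar.card : ℝ)⁻¹ * ∑ i ∈ cstar, x i j) ^ 2 ≤ C'') :
    ∀ istar ∈ cstar, ∀ i ∈ c,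
      h (x istar) - h (x i) ≤
        B' * (C'' * ((V + Z) / (2 * Real.sqrt (V * Z))) * δ * Real.sqrt d * N / (P * Y)
          + N * ((V + Z) / (2 * Real.sqrt (V * Z))) * δ * Real.sqrt d / Y) := by
  intro istar histar i hi
  set Q := (V + Z) / (2 * √(V * Z))
  have hQ : 0 ≤ Q := div_nonneg (by linarith) (by positivity)
  have hmean : √(∑ j, clusterMean c x j ^ 2) * Y ≤ Q * δ :=
    calc _ ≤ √(∑ j, clusterMean c x j ^ 2) * √(∑ j, y j ^ 2) := by gcongr
      _ ≤ Q * ∑ j, clusterMean c x j * y j :=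
        sqrt_sum_sq_mul_sqrt_sum_sq_le_kantorovich univ _ y hV hVZ
          (fun j _ => (le_div_iff₀ (hypos j)).1 (hratio j).1)
          (fun j _ => (div_le_iff₀ (hypos j)).1 (hratio j).2)
      _ ≤ Q * δ := mul_le_mul_of_nonneg_left hdot hQ
  have hmeanstar : √(∑ j, clusterMean cstar x j ^ 2) ≤ C'' * (Q * δ) / (P * Y) :=
    le_div_of_alignment hY hP (by positivity) (Real.sqrt_nonneg _) hmean
      (halign.trans (Real.sum_mul_le_sqrt_mul_sqrt _ _ _))
      (by rwa [Real.sq_sqrt (by positivity)])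
  have hl1star := sum_le_mul_sqrt_card_mul_sqrt_sum_clusterMean_sq hx hcstarN histar
  have hl1 := sum_le_mul_sqrt_card_mul_sqrt_sum_clusterMean_sq hx hcN hi
  rw [Fintype.card_fin] at hl1star hl1
  calc h (x istar) - h (x i) ≤ B' * (∑ j, x istar j + ∑ j, x i j) :=
        sub_le_mul_sum_add_sum_of_lipschitz hB'.le hlip (hx istar) (hx i)
    _ ≤ B' * (N * √d * (C'' * (Q * δ) / (P * Y)) + N * √d * (Q * δ / Y)) := by
        gcongr
        · exact hl1star.trans (by gcongr)
        · exact hl1.trans (by gcongr; exact (le_div_iff₀ hY).2 hmean)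
    _ = _ := by ring

/-- deterministic clustering error bound from Lemma 3:
with `h` being `B'`-Lipschitz in the `ℓ1` norm, `c` and `c*` finite nonempty
clusters of size at most `N` of nonnegative context vectors with means `x̄_c`
and `x̄_{c*}`, Kantorovich ratio bounds `V ≤ (x̄_c)_j / y_j ≤ Z`, separation
`⟨x̄_c, y⟩ ≤ δ`, `‖y‖₂ ≥ Y`, alignment `P ≤ ⟨x̄_c, x̄_{c*}⟩` and
`‖x̄_{c*}‖₂² ≤ C''`, we get for every `i* ∈ c*` and `i ∈ c` that
`h (x i*) - h (x i) ≤ B' (C'' Q δ √d N / (P Y) + N Q δ √d / Y)` with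
`Q = (V + Z)/(2√(VZ))`. -/
theorem clustering_error_bound {ι : Type*} (d N : ℕ) (hd : 1 ≤ d) (hN : 1 ≤ N)
    (h : (Fin d → ℝ) → ℝ) (B' : ℝ) (hB' : 0 < B')
    (hlip : ∀ u u' : Fin d → ℝ, |h u - h u'| ≤ B' * ∑ j, |u j - u' j|)
    (c cstar : Finset ι) (hc : c.Nonempty) (hcstar : cstar.Nonempty)
    (hcN : c.card ≤ N) (hcstarN : cstar.card ≤ N)
    (x : ι → Fin d → ℝ) (hx : ∀ i, ∀ j, 0 ≤ x i j)
    (y : Fin d → ℝ) (V Z δ Y P C'' : ℝ)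
    (hV : 0 < V) (hVZ : V ≤ Z) (hδ : 0 < δ) (hY : 0 < Y)
    (hP : 0 < P) (hC : 0 < C'')
    (hmeanpos : ∀ j, 0 < (c.card : ℝ)⁻¹ * ∑ i ∈ c, x i j)
    (hypos : ∀ j, 0 < y j)
    (hratio : ∀ j, V ≤ ((c.card : ℝ)⁻¹ * ∑ i ∈ c, x i j) / y j ∧
      ((c.card : ℝ)⁻¹ * ∑ i ∈ c, x i j) / y j ≤ Z)
    (hdot : ∑ j, ((c.card : ℝ)⁻¹ * ∑ i ∈ c, x i j) * y j ≤ δ)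
    (hynorm : Y ≤ Real.sqrt (∑ j, (y j) ^ 2))
    (halign : P ≤ ∑ j, ((c.card : ℝ)⁻¹ * ∑ i ∈ c, x i j) *
      ((cstar.card : ℝ)⁻¹ * ∑ i ∈ cstar, x i j))
    (hstarnorm : ∑ j, ((cstar.card : ℝ)⁻¹ * ∑ i ∈ cstar, x i j) ^ 2 ≤ C'') :
    ∀ istar ∈ cstar, ∀ i ∈ c,
      h (x istar) - h (x i) ≤
        B' * (C'' * ((V + Z) / (2 * Real.sqrt (V * Z))) * δ * Real.sqrt d * N / (P * Y)
          + N * ((V + Z) / (2 * Real.sqrt (V * Z))) * δ * Real.sqrt d / Y) :=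
  clustering_error_bound_general d N h B' hB' hlip c cstar hcN hcstarN x hx y V Z δ Y P C'' hV hVZ
    hδ hY hP hypos hratio hdot hynorm halign hstarnorm
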